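/- arXiv:0910.1624 — 2 statements merged into one kernel-verified Lean document; each statement's English description precedes it below -/
import Mathlib

section
/- Let T be a finite graph (allowing multiple edges but no loops), G an abelian group, and X ⊆ G symmetric such that G is not covered by finitely many translates of X. Given any function Φ from oriented edges of T to G with Φ(−e) = −Φ(e), there is a function c from vertices of T to G such that the modified function Φ'(e) = Φ(e) + c(target(e)) − c(source(e)) takes values in G∖X on every edge. -/
/-- Let `T` be a finite graph with no loops (edges have distinct endpoints `s e ≠ t e`),
`G` an abelian group, and `X ⊆ G` a symmetric subset such that `G` is not covered by
finitely many translates of `X`. Then any `G`-valued cochain `Φ` on the oriented edges can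
be modified by a coboundary, `Φ'(e) = Φ(e) + c(t(e)) − c(s(e))`, so as to take values in
`G ∖ X` on every edge. -/
theorem exists_admissible_coloring {V E G : Type*} [Fintype V] [Fintype E]
    [AddCommGroup G]
    (s t : E → V) (hloop : ∀ e, s e ≠ t e)
    (X : Set G) (hsym : -X = X)
    (hcov : ∀ fs : Finset G, (⋃ a ∈ fs, (fun x => a + x) '' X) ≠ Set.univ)
    (Φ : E → G) :
    ∃ c : V → G, ∀ e, Φ e + c (t e) - c (s e) ∉ X := by
  classical
  suffices h : ∀ S : Finset V, ∃ c : V → G,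
      ∀ e, s e ∈ S → t e ∈ S → Φ e + c (t e) - c (s e) ∉ X by
    obtain ⟨c, hc⟩ := h Finset.univ
    exact ⟨c, fun e => hc e (Finset.mem_univ _) (Finset.mem_univ _)⟩
  intro S
  induction S using Finset.induction_on with
  | empty => exact ⟨fun _ => 0, fun e he _ => absurd he (Finset.notMem_empty _)⟩
  | @insert v S hv IH =>
    obtain ⟨c, hc⟩ := IH
    set fs : Finset G := (Finset.univ.image fun e => c (s e) - Φ e) ∪
      (Finset.univ.image fun e => c (t e) + Φ e) with hfs
    have hx : ∃ x : G, x ∉ ⋃ a ∈ fs, (fun y => a + y) '' X := by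
      by_contra hcon
      push_neg at hcon
      exact hcov fs (Set.eq_univ_iff_forall.mpr hcon)
    obtain ⟨x, hx⟩ := hx
    have hx' : ∀ a ∈ fs, ∀ y ∈ X, x ≠ a + y := by
      intro a ha y hy hxy
      exact hx (Set.mem_iUnion₂.mpr ⟨a, ha, ⟨y, hy, hxy.symm⟩⟩)
    refine ⟨Function.update c v x, ?_⟩
    intro e hse hte hmem
    by_cases hsv : s e = v
    · by_cases htv : t e = v
      · exact hloop e (hsv.trans htv.symm)
      · -- s e = v, t e ∈ S
        have hteS : t e ∈ S := (Finset.mem_insert.mp hte).resolve_left htv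
        rw [hsv, Function.update_self, Function.update_of_ne htv] at hmem
        have hneg : -(Φ e + c (t e) - x) ∈ X := by rw [← hsym]; exact Set.neg_mem_neg.mpr hmem
        have : x = (c (t e) + Φ e) + (-(Φ e + c (t e) - x)) := by abel
        exact hx' _ (Finset.mem_union_right _ (Finset.mem_image.mpr
          ⟨e, Finset.mem_univ _, rfl⟩)) _ hneg this
    · have hseS : s e ∈ S := (Finset.mem_insert.mp hse).resolve_left hsv
      by_cases htv : t e = v
      · -- t e = v, s e ∈ S
        rw [htv, Function.update_self, Function.update_of_ne hsv] at hmem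
        have : x = (c (s e) - Φ e) + (Φ e + x - c (s e)) := by abel
        exact hx' _ (Finset.mem_union_left _ (Finset.mem_image.mpr
          ⟨e, Finset.mem_univ _, rfl⟩)) _ hmem this
      · have hteS : t e ∈ S := (Finset.mem_insert.mp hte).resolve_left htv
        rw [Function.update_of_ne hsv, Function.update_of_ne htv] at hmem
        exact hc e hseS hteS hmem
end

section
/- Let M be a finite connected 1-dimensional CW-complex (graph) T with a distinguished subset ∂T of univalent vertices, G an abelian group, and r ≥ 1. Suppose c̃ ∈ C_1(T; ℂ/2rℤ) is a 1-chain with ∂c̃ ≡ c_∂ + w (mod 2rℤ) where c_∂ ∈ C_0(∂T; ℂ/2rℤ), w ∈ C_0(T∖∂T; 2ℤ). If b ∈ C_0(∂T; ℂ) is a lift of c_∂ with [b+w] = 0 ∈ H_0(T; ℂ) = ℂ (T connected), then c̃ lifts to c ∈ C_1(T; ℂ) with ∂c = b + w. -/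
open Finset

private lemma path_chain {Vert Edge : Type*} [Fintype Edge] [DecidableEq Vert]
    (s t : Edge → Vert) {u v : Vert}
    (h : Relation.ReflTransGen
      (fun a b => ∃ e, (s e = a ∧ t e = b) ∨ (s e = b ∧ t e = a)) u v) :
    ∃ P : Edge → ℤ, ∀ x,
      (∑ e, if t e = x then P e else 0) - (∑ e, if s e = x then P e else 0)
        = (if v = x then 1 else 0) - (if u = x then 1 else 0) := by
  classical
  induction h with
  | refl => exact ⟨0, by intro x; simp⟩
  | tail h step ih =>
    obtain ⟨P, hP⟩ := ih
    obtain ⟨e, he⟩ := step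
    rcases he with ⟨hs, ht⟩ | ⟨hs, ht⟩
    · refine ⟨fun e' => P e' + if e' = e then 1 else 0, fun x => ?_⟩
      have h1 : ∀ e', (if t e' = x then P e' + (if e' = e then 1 else 0) else 0)
          = (if t e' = x then P e' else 0) + (if e' = e then (if t e = x then (1:ℤ) else 0) else 0) := by
        intro e'
        rcases eq_or_ne e' e with rfl | hne
        · split <;> simp_all
        · simp [hne]
      have h2 : ∀ e', (if s e' = x then P e' + (if e' = e then 1 else 0) else 0)
          = (if s e' = x then P e' else 0) + (if e' = e then (if s e = x then (1:ℤ) else 0) else 0) := by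
        intro e'
        rcases eq_or_ne e' e with rfl | hne
        · split <;> simp_all
        · simp [hne]
      simp only [h1, h2, Finset.sum_add_distrib, Finset.sum_ite_eq' Finset.univ e,
        Finset.mem_univ, if_true]
      have := hP x
      rw [hs, ht]
      omega
    · refine ⟨fun e' => P e' - if e' = e then 1 else 0, fun x => ?_⟩
      have h1 : ∀ e', (if t e' = x then P e' - (if e' = e then 1 else 0) else 0)
          = (if t e' = x then P e' else 0) - (if e' = e then (if t e = x then (1:ℤ) else 0) else 0) := by
        intro e'
        rcases eq_or_ne e' e with rfl | hne
        · split <;> simp_all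
        · simp [hne]
      have h2 : ∀ e', (if s e' = x then P e' - (if e' = e then 1 else 0) else 0)
          = (if s e' = x then P e' else 0) - (if e' = e then (if s e = x then (1:ℤ) else 0) else 0) := by
        intro e'
        rcases eq_or_ne e' e with rfl | hne
        · split <;> simp_all
        · simp [hne]
      simp only [h1, h2, Finset.sum_sub_distrib, Finset.sum_ite_eq' Finset.univ e,
        Finset.mem_univ, if_true]
      have := hP x
      rw [hs, ht]
      omega

/-- Homological lifting lemma: let `T` be a finite connected graph with a distinguished set
`bdry` of univalent vertices, and let `c̃` be a 1-chain with coefficients in `ℂ/2rℤ` whose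
boundary is `c_∂ + w (mod 2rℤ)`, where `c_∂` is supported on `bdry` and `w` is an interior
0-chain with values in `2ℤ`. If `b` is a ℂ-lift of `c_∂` supported on `bdry` with
`[b + w] = 0 ∈ H_0(T; ℂ) = ℂ` (i.e. total sum zero), then `c̃` lifts to a ℂ-valued 1-chain
`c` with `∂c = b + w`. -/
theorem one_chain_lifting {Vert Edge : Type*} [Fintype Vert] [Fintype Edge]
    [DecidableEq Vert]
    (s t : Edge → Vert) (r : ℕ) (hr : 0 < r)
    (hconn : ∀ u v : Vert, Relation.ReflTransGen
      (fun a b => ∃ e, (s e = a ∧ t e = b) ∨ (s e = b ∧ t e = a)) u v)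
    (bdry : Set Vert) [DecidablePred (· ∈ bdry)]
    (huniv : ∀ v ∈ bdry,
      (Finset.univ.filter (fun e => s e = v)).card +
        (Finset.univ.filter (fun e => t e = v)).card = 1)
    (ctilde : Edge → ℂ ⧸ AddSubgroup.zmultiples (2 * (r : ℂ)))
    (cpartial : Vert → ℂ ⧸ AddSubgroup.zmultiples (2 * (r : ℂ)))
    (hcsupp : ∀ v ∉ bdry, cpartial v = 0)
    (w : Vert → ℂ)
    (hwsupp : ∀ v ∈ bdry, w v = 0)
    (hwint : ∀ v, ∃ n : ℤ, w v = 2 * (n : ℂ))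
    (hbound : ∀ v : Vert,
      (∑ e, if t e = v then ctilde e else 0) - (∑ e, if s e = v then ctilde e else 0)
        = cpartial v + (QuotientAddGroup.mk (w v)))
    (b : Vert → ℂ)
    (hb : ∀ v, (QuotientAddGroup.mk (b v) :
        ℂ ⧸ AddSubgroup.zmultiples (2 * (r : ℂ))) = cpartial v)
    (hbsupp : ∀ v ∉ bdry, b v = 0)
    (hzero : ∑ v, (b v + w v) = 0) :
    ∃ c : Edge → ℂ,
      (∀ e, (QuotientAddGroup.mk (c e) :
          ℂ ⧸ AddSubgroup.zmultiples (2 * (r : ℂ))) = ctilde e) ∧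
      (∀ v, (∑ e, if t e = v then c e else 0) - (∑ e, if s e = v then c e else 0)
          = b v + w v) := by
  classical
  rcases isEmpty_or_nonempty Vert with hV | hV
  · haveI : IsEmpty Edge := ⟨fun e => IsEmpty.false (s e)⟩
    exact ⟨0, fun e => (IsEmpty.false e).elim, fun v => (IsEmpty.false v).elim⟩
  set φ : ℂ →+ ℂ ⧸ AddSubgroup.zmultiples (2 * (r : ℂ)) :=
    QuotientAddGroup.mk' (AddSubgroup.zmultiples (2 * (r : ℂ))) with hφ
  have hφmk : ∀ x : ℂ, φ x = QuotientAddGroup.mk x := fun x => rfl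
  -- arbitrary lift
  set c₀ : Edge → ℂ := fun e => Quotient.out (ctilde e) with hc₀
  have hmk : ∀ e, (QuotientAddGroup.mk (c₀ e) : ℂ ⧸ AddSubgroup.zmultiples (2 * (r : ℂ))) = ctilde e :=
    fun e => QuotientAddGroup.out_eq' (ctilde e)
  -- the defect
  set f : Vert → ℂ := fun v =>
    ((∑ e, if t e = v then c₀ e else 0) - (∑ e, if s e = v then c₀ e else 0)) - (b v + w v)
    with hf
  have hfmem : ∀ v, f v ∈ AddSubgroup.zmultiples (2 * (r : ℂ)) := by
    intro v
    have hzero' : φ (f v) = 0 := by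
      have hA : φ (∑ e, if t e = v then c₀ e else 0) = ∑ e, if t e = v then ctilde e else 0 := by
        rw [map_sum]
        refine Finset.sum_congr rfl fun e _ => ?_
        rw [apply_ite φ, map_zero, hφmk, hmk]
      have hB : φ (∑ e, if s e = v then c₀ e else 0) = ∑ e, if s e = v then ctilde e else 0 := by
        rw [map_sum]
        refine Finset.sum_congr rfl fun e _ => ?_
        rw [apply_ite φ, map_zero, hφmk, hmk]
      have hfv : φ (f v) = φ (∑ e, if t e = v then c₀ e else 0)
          - φ (∑ e, if s e = v then c₀ e else 0) - (φ (b v) + φ (w v)) := by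
        simp only [hf, map_sub, map_add]
      rw [hfv, hA, hB, hbound v, hφmk, hφmk, hb v]
      abel
    exact (QuotientAddGroup.eq_zero_iff _).mp hzero'
  have hsumf : ∑ v, f v = 0 := by
    have hA : ∑ v, ∑ e, (if t e = v then c₀ e else 0) = ∑ e, c₀ e := by
      rw [Finset.sum_comm]
      exact Finset.sum_congr rfl fun e _ => by simp
    have hB : ∑ v, ∑ e, (if s e = v then c₀ e else 0) = ∑ e, c₀ e := by
      rw [Finset.sum_comm]
      exact Finset.sum_congr rfl fun e _ => by simp
    simp only [hf, Finset.sum_sub_distrib, hA, hB, hzero]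
    ring
  -- the correction chain
  have v₀ : Vert := Classical.arbitrary Vert
  choose P hP using fun v => path_chain s t (hconn v₀ v)
  set d : Edge → ℂ := fun e => ∑ v, f v * ((P v e : ℤ) : ℂ) with hd
  have hdmk : ∀ e, (QuotientAddGroup.mk (d e) : ℂ ⧸ AddSubgroup.zmultiples (2 * (r : ℂ))) = 0 := by
    intro e
    rw [QuotientAddGroup.eq_zero_iff]
    refine AddSubgroup.sum_mem _ fun v _ => ?_
    have hm := AddSubgroup.zsmul_mem _ (hfmem v) (P v e)
    simpa [zsmul_eq_mul, mul_comm] using hm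
  have hbd : ∀ x, (∑ e, if t e = x then d e else 0) - (∑ e, if s e = x then d e else 0)
      = f x := by
    intro x
    have hA : ∑ e, (if t e = x then d e else 0)
        = ∑ v, f v * ((∑ e, if t e = x then P v e else 0 : ℤ) : ℂ) := by
      have hpt : ∀ e, (if t e = x then d e else 0)
          = ∑ v, f v * (if t e = x then ((P v e : ℤ) : ℂ) else 0) := by
        intro e
        split <;> simp [hd]
      rw [Finset.sum_congr rfl fun e _ => hpt e, Finset.sum_comm]
      refine Finset.sum_congr rfl fun v _ => ?_
      rw [← Finset.mul_sum]
      congr 1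
      push_cast
      exact Finset.sum_congr rfl fun e _ => by split <;> simp
    have hB : ∑ e, (if s e = x then d e else 0)
        = ∑ v, f v * ((∑ e, if s e = x then P v e else 0 : ℤ) : ℂ) := by
      have hpt : ∀ e, (if s e = x then d e else 0)
          = ∑ v, f v * (if s e = x then ((P v e : ℤ) : ℂ) else 0) := by
        intro e
        split <;> simp [hd]
      rw [Finset.sum_congr rfl fun e _ => hpt e, Finset.sum_comm]
      refine Finset.sum_congr rfl fun v _ => ?_
      rw [← Finset.mul_sum]
      congr 1
      push_cast
      exact Finset.sum_congr rfl fun e _ => by split <;> simp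
    have hpt2 : ∀ v, f v * ((∑ e, if t e = x then P v e else 0 : ℤ) : ℂ)
        - f v * ((∑ e, if s e = x then P v e else 0 : ℤ) : ℂ)
        = f v * (if v = x then 1 else 0) - f v * (if v₀ = x then 1 else 0) := by
      intro v
      have h' : ((∑ e, if t e = x then P v e else 0 : ℤ) : ℂ)
          - ((∑ e, if s e = x then P v e else 0 : ℤ) : ℂ)
          = (if v = x then 1 else 0) - (if v₀ = x then 1 else 0) := by
        rw [← Int.cast_sub, hP v x]
        push_cast
        split <;> split <;> norm_num
      rw [← mul_sub, h', mul_sub]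
    rw [hA, hB, ← Finset.sum_sub_distrib, Finset.sum_congr rfl fun v _ => hpt2 v,
      Finset.sum_sub_distrib]
    have e1 : ∑ v, f v * (if v = x then 1 else 0) = f x := by
      rw [Finset.sum_congr rfl (fun v _ => by rw [mul_ite, mul_one, mul_zero]),
        Finset.sum_ite_eq' Finset.univ x f, if_pos (Finset.mem_univ x)]
    have e2 : ∑ v, f v * (if v₀ = x then 1 else 0) = 0 := by
      rw [← Finset.sum_mul, hsumf, zero_mul]
    rw [e1, e2, sub_zero]
  refine ⟨fun e => c₀ e - d e, fun e => ?_, fun v => ?_⟩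
  · have : (QuotientAddGroup.mk (c₀ e - d e) : ℂ ⧸ AddSubgroup.zmultiples (2 * (r : ℂ)))
        = QuotientAddGroup.mk (c₀ e) - QuotientAddGroup.mk (d e) := rfl
    rw [this, hmk e, hdmk e, sub_zero]
  · have hptA : ∀ e, (if t e = v then c₀ e - d e else 0)
        = (if t e = v then c₀ e else 0) - (if t e = v then d e else 0) := by
      intro e; split <;> simp
    have hptB : ∀ e, (if s e = v then c₀ e - d e else 0)
        = (if s e = v then c₀ e else 0) - (if s e = v then d e else 0) := by
      intro e; split <;> simp
    rw [Finset.sum_congr rfl fun e _ => hptA e, Finset.sum_congr rfl fun e _ => hptB e,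
      Finset.sum_sub_distrib, Finset.sum_sub_distrib]
    have := hbd v
    have hfv := hf
    simp only [hf] at *
    linear_combination -this
end
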